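/- (Hoeffding confidence sequence.) Let α ∈ (0,1), let (λ_t) be a predictable sequence with λ_t > 0, and let (c_t) be a predictable sequence with c_t ≥ max_{i∈N_t} π(i)/q_t(i) almost surely. Define m̂_t = (π(I_t)/q_t(I_t)) f(I_t) + Σ_{i=1}^{t−1} π(I_i) f(I_i), the weighted center μ̂_t(λ_1^t) = (Σ_{i=1}^t λ_i m̂_i)/(Σ_{i=1}^t λ_i), and C_t^H = (μ̂_t(λ_1^t) ± (log(2/α) + Σ_{i=1}^t λ_i² c_i²/8)/(Σ_{i=1}^t λ_i)) ∩ [0,1]. Then P(∃ t ∈ {1,…,N} : m* ∉ C_t^H) ≤ α. -/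

import Mathlib

/-!
For a predictable sequence `θ`, the process
`M_t = exp (∑_{i ≤ t} (θ_i (m̂_i - m*) - θ_i² c_i² / 8))` is a nonnegative supermartingale with
`M_0 = 1`. Indeed `m̂_t - m* = π(I_t) f(I_t) / q_t(I_t) - (m* - ∑_{i < t} π(I_i) f(I_i))`, and given
`F_{t-1}` the importance-weighted value `π(I_t) f(I_t) / q_t(I_t)` lies in `[0, c_t]` and has mean
`∑_{i ∈ N_t} π(i) f(i) = m* - ∑_{i < t} π(I_i) f(I_i)`, so Hoeffding's lemma bounds the conditional
mgf of the increment by `exp (θ_t² c_t² / 8)`. Ville's inequality gives `P(∃ t, M_t ≥ 2/α) ≤ α/2`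
for `θ = λ` and for `θ = -λ`, and `m* ∉ C_t^H` forces one of these two processes above `2/α` at `t`.
-/

open MeasureTheory Finset

namespace RLFA

variable {Ω : Type*}

/-- `remaining I t ω` is the set `N_t = {1,…,N} \ {I_1, …, I_{t-1}}` of indices not yet
sampled before time `t`. -/
def remaining {N : ℕ} (I : ℕ → Ω → Fin N) (t : ℕ) (ω : Ω) : Finset (Fin N) :=
  Finset.univ \ (Finset.Icc 1 (t - 1)).image fun j => I j ω

/-- The filtration `F_t = σ(I_1, …, I_t)`. -/
def filt {N : ℕ} (I : ℕ → Ω → Fin N) (t : ℕ) : MeasurableSpace Ω :=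
  ⨆ j ∈ Finset.Icc 1 t, MeasurableSpace.comap (I j) ⊤

/-- The importance-weighted observation `Z_t = f(I_t) · π(I_t) / q_t(I_t)`. -/
noncomputable def Zt {N : ℕ} (π f : Fin N → ℝ) (q : ℕ → Ω → Fin N → ℝ)
    (I : ℕ → Ω → Fin N) (t : ℕ) (ω : Ω) : ℝ :=
  f (I t ω) * (π (I t ω) / q t ω (I t ω))

/-- `μ_t(m) = m − Σ_{j=1}^{t−1} π(I_j) f(I_j)`. -/
def muT {N : ℕ} (π f : Fin N → ℝ) (I : ℕ → Ω → Fin N) (m : ℝ) (t : ℕ) (ω : Ω) : ℝ :=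
  m - ∑ j ∈ Finset.Icc 1 (t - 1), π (I j ω) * f (I j ω)

/-- The running estimate `m̂_t = (π(I_t)/q_t(I_t)) f(I_t) + Σ_{i=1}^{t−1} π(I_i) f(I_i)`. -/
noncomputable def mhat {N : ℕ} (π f : Fin N → ℝ) (q : ℕ → Ω → Fin N → ℝ)
    (I : ℕ → Ω → Fin N) (t : ℕ) (ω : Ω) : ℝ :=
  π (I t ω) / q t ω (I t ω) * f (I t ω) +
    ∑ i ∈ Finset.Icc 1 (t - 1), π (I i ω) * f (I i ω)

/-- The weighted center `μ̂_t(λ_1^t) = (Σ_{i=1}^t λ_i m̂_i)/(Σ_{i=1}^t λ_i)`. -/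
noncomputable def hoefCenter {N : ℕ} (π f : Fin N → ℝ) (q : ℕ → Ω → Fin N → ℝ)
    (I : ℕ → Ω → Fin N) (lam : ℕ → Ω → ℝ) (t : ℕ) (ω : Ω) : ℝ :=
  (∑ i ∈ Finset.Icc 1 t, lam i ω * mhat π f q I i ω) / ∑ i ∈ Finset.Icc 1 t, lam i ω

/-- The Hoeffding radius `(log(2/α) + Σ_{i=1}^t λ_i² c_i²/8)/(Σ_{i=1}^t λ_i)`. -/
noncomputable def hoefRadius (α : ℝ) (lam c : ℕ → Ω → ℝ) (t : ℕ) (ω : Ω) : ℝ :=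
  (Real.log (2 / α) + ∑ i ∈ Finset.Icc 1 t, (lam i ω) ^ 2 * (c i ω) ^ 2 / 8) /
    ∑ i ∈ Finset.Icc 1 t, lam i ω

open ProbabilityTheory

lemma _root_.sum_mul_exp_le_of_mem_Icc {ι : Type*} (s : Finset ι) (p x : ι → ℝ)
    (hp : ∀ i ∈ s, 0 ≤ p i) (hp1 : ∑ i ∈ s, p i = 1) {a b : ℝ}
    (hx : ∀ i ∈ s, x i ∈ Set.Icc a b) (θ : ℝ) :
    ∑ i ∈ s, p i * Real.exp (θ * (x i - ∑ j ∈ s, p j * x j)) ≤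
      Real.exp (θ ^ 2 * (b - a) ^ 2 / 8) := by
  let _ : MeasurableSpace s := ⊤
  have : MeasurableSingletonClass s := ⟨fun _ => trivial⟩
  let P : PMF s := PMF.ofFintype (fun i : s => ENNReal.ofReal (p i)) <| by
    rw [← ENNReal.ofReal_sum_of_nonneg fun (i : s) _ => hp i i.2, sum_coe_sort s p, hp1,
      ENNReal.ofReal_one]
  have hP : ∀ g : s → ℝ, ∫ i, g i ∂P.toMeasure = ∑ i : s, p i * g i := fun g => by
    rw [PMF.integral_eq_sum]
    refine sum_congr rfl fun i _ => ?_
    rw [PMF.ofFintype_apply, ENNReal.toReal_ofReal (hp i i.2), smul_eq_mul]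
  have hoeffding := (hasSubgaussianMGF_of_mem_Icc (X := fun i : s => x i) (μ := P.toMeasure)
    (measurable_of_countable _).aemeasurable (ae_of_all _ fun i => hx i i.2)).mgf_le θ
  rw [mgf, hP, hP] at hoeffding
  calc ∑ i ∈ s, p i * Real.exp (θ * (x i - ∑ j ∈ s, p j * x j))
      = ∑ i : s, p i * Real.exp (θ * (x i - ∑ j : s, p j * x j)) := by
        rw [sum_coe_sort s fun j => p j * x j]
        exact (sum_coe_sort s _).symm
    _ ≤ _ := hoeffding
    _ = Real.exp (θ ^ 2 * (b - a) ^ 2 / 8) := by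
        rw [NNReal.coe_pow, NNReal.coe_div, coe_nnnorm, Real.norm_eq_abs, NNReal.coe_ofNat,
          div_pow, sq_abs]
        ring_nf

theorem _root_.MeasureTheory.Supermartingale.maximal_ineq {Ω : Type*} {m0 : MeasurableSpace Ω}
    {μ : Measure Ω} [IsFiniteMeasure μ] {𝒢 : Filtration ℕ m0} {f : ℕ → Ω → ℝ}
    (hf : Supermartingale f 𝒢 μ) (hnonneg : 0 ≤ f) {ε : ℝ} (hε : 0 ≤ ε) (n : ℕ) :
    ε * μ.real {ω | ∃ k ≤ n, ε ≤ f k ω} ≤ μ[f 0] := by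
  let τ : Ω → WithTop ℕ := fun ω => (hittingBtwn f (Set.Ici ε) 0 n ω : ℕ)
  have hτ : IsStoppingTime 𝒢 τ := hf.1.adapted.isStoppingTime_hittingBtwn measurableSet_Ici
  have hτn : ∀ ω, τ ω ≤ n := fun ω => WithTop.coe_le_coe.2 (hittingBtwn_le ω)
  have hint : Integrable (stoppedValue f τ) μ := by
    simpa [stoppedValue] using (hf.neg.integrable_stoppedValue hτ hτn).neg
  have hopt : μ[stoppedValue f τ] ≤ μ[f 0] := by
    simpa [stoppedValue, integral_neg] using hf.neg.expected_stoppedValue_mono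
      (isStoppingTime_const 𝒢 0) hτ (fun ω => WithTop.coe_le_coe.2 (Nat.zero_le _)) hτn
  have hhit : {ω | ∃ k ≤ n, ε ≤ f k ω} ⊆ {ω | ε ≤ stoppedValue f τ ω} := by
    rintro ω ⟨k, hkn, hk⟩
    exact stoppedValue_hittingBtwn_mem ⟨k, ⟨Nat.zero_le k, hkn⟩, hk⟩
  calc ε * μ.real {ω | ∃ k ≤ n, ε ≤ f k ω} ≤ ε * μ.real {ω | ε ≤ stoppedValue f τ ω} :=
        mul_le_mul_of_nonneg_left (measureReal_mono hhit) hε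
    _ ≤ μ[stoppedValue f τ] :=
        mul_meas_ge_le_integral_of_nonneg (ae_of_all _ fun ω => hnonneg _ ω) hint ε
    _ ≤ μ[f 0] := hopt

lemma _root_.Measurable.apply_of_countable {α ι γ : Type*} {m : MeasurableSpace α}
    [MeasurableSpace ι] [Countable ι] [MeasurableSingletonClass ι] [MeasurableSpace γ]
    {H : α → ι → γ} (hH : ∀ i, Measurable fun a => H a i) {J : α → ι} (hJ : Measurable J) :
    Measurable fun a => H a (J a) :=
  (measurable_from_prod_countable_left (f := fun p : α × ι => H p.1 p.2) hH).comp
    (measurable_id.prodMk hJ)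

lemma _root_.MeasureTheory.integrable_of_condExp_ae_eq_pos {α : Type*}
    {m m0 : MeasurableSpace α} {μ : Measure α} [NeZero μ] {g h : α → ℝ}
    (hg : μ[g|m] =ᵐ[μ] h) (hh : ∀ᵐ a ∂μ, 0 < h a) : Integrable g μ := by
  by_contra hni
  rw [condExp_of_not_integrable hni] at hg
  obtain ⟨a, ha, hpos⟩ := (hg.and hh).exists
  exact hpos.ne ha

section Filtration

variable {N : ℕ} {I : ℕ → Ω → Fin N}

lemma filt_mono (I : ℕ → Ω → Fin N) : Monotone (filt I) := fun _ _ h =>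
  iSup₂_le fun j hj => le_iSup₂_of_le (f := fun j (_ : j ∈ Icc 1 _) => _) j
    (by simp only [mem_Icc] at hj ⊢; omega) le_rfl

lemma filt_le [m0 : MeasurableSpace Ω] (hI : ∀ t, Measurable (I t)) (t : ℕ) : filt I t ≤ m0 :=
  iSup₂_le fun j _ => (hI j).comap_le

lemma measurable_filt (I : ℕ → Ω → Fin N) {j t : ℕ} (h1 : 1 ≤ j) (h2 : j ≤ t) :
    Measurable[filt I t] (I j) :=
  measurable_iff_comap_le.2 <| le_iSup₂_of_le (f := fun j (_ : j ∈ Icc 1 t) => _) j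
    (mem_Icc.2 ⟨h1, h2⟩) le_rfl

def filtration [m0 : MeasurableSpace Ω] (I : ℕ → Ω → Fin N) (hI : ∀ t, Measurable (I t)) :
    Filtration ℕ m0 :=
  ⟨filt I, filt_mono I, filt_le hI⟩

def IsPredictable (I : ℕ → Ω → Fin N) (g : ℕ → Ω → ℝ) : Prop :=
  ∀ t, 1 ≤ t → t ≤ N → StronglyMeasurable[filt I (t - 1)] (g t)

lemma IsPredictable.measurable {g : ℕ → Ω → ℝ} (hg : IsPredictable I g) {i t : ℕ} (hi : 1 ≤ i)
    (hiN : i ≤ N) (hit : i ≤ t + 1) : Measurable[filt I t] (g i) :=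
  (hg i hi hiN).measurable.mono (filt_mono I (by omega)) le_rfl

end Filtration

structure IsSamplingScheme [MeasurableSpace Ω] (μ : Measure Ω) {N : ℕ} (I : ℕ → Ω → Fin N)
    (q : ℕ → Ω → Fin N → ℝ) : Prop where
  measurable : ∀ t, Measurable (I t)
  stronglyMeasurable_q : ∀ t, 1 ≤ t → t ≤ N → ∀ i,
    StronglyMeasurable[filt I (t - 1)] fun ω => q t ω i
  q_pos : ∀ t ω, 1 ≤ t → t ≤ N → ∀ i ∈ remaining I t ω, 0 < q t ω i
  sum_q : ∀ t ω, 1 ≤ t → t ≤ N → ∑ i ∈ remaining I t ω, q t ω i = 1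
  mem_remaining : ∀ t ω, 1 ≤ t → t ≤ N → I t ω ∈ remaining I t ω
  condExp_apply : ∀ t, 1 ≤ t → t ≤ N → ∀ G : Ω → Fin N → ℝ,
    (∀ i, StronglyMeasurable[filt I (t - 1)] fun ω => G ω i) →
    μ[(fun ω => G ω (I t ω)) | filt I (t - 1)]
      =ᵐ[μ] fun ω => ∑ i ∈ remaining I t ω, q t ω i * G ω i

section Sampling

variable {N : ℕ} (π f : Fin N → ℝ) {q : ℕ → Ω → Fin N → ℝ} {I : ℕ → Ω → Fin N}

lemma sum_remaining_eq_muT (ω : Ω) {T : ℕ} (hT : T ≤ N + 1)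
    (hWoR : ∀ t, 1 ≤ t → t ≤ N → I t ω ∈ remaining I t ω) :
    ∑ i ∈ remaining I T ω, π i * f i = muT π f I (∑ i, π i * f i) T ω := by
  have hne : ∀ j k, 1 ≤ j → j < k → k ≤ N → I j ω ≠ I k ω := fun j k hj hjk hk h => by
    have := hWoR k (by omega) hk
    simp only [remaining, mem_sdiff, mem_univ, true_and, mem_image, mem_Icc] at this
    exact this ⟨j, ⟨hj, by omega⟩, h⟩
  have hinj : Set.InjOn (fun j => I j ω) (Icc 1 (T - 1) : Set ℕ) := by
    intro j hj k hk hjk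
    simp only [coe_Icc, Set.mem_Icc] at hj hk
    by_contra hjk'
    rcases lt_or_gt_of_ne hjk' with h | h
    exacts [hne j k hj.1 h (by omega) hjk, hne k j hk.1 h (by omega) hjk.symm]
  rw [remaining, sum_sdiff_eq_sub (subset_univ _), sum_image hinj, muT]

lemma measurable_sum_sampled {T t : ℕ} (hT : T ≤ t + 1) :
    Measurable[filt I t] fun ω => ∑ j ∈ Icc 1 (T - 1), π (I j ω) * f (I j ω) :=
  Finset.measurable_sum _ fun j hj =>
    (measurable_of_countable fun k => π k * f k).comp
      (measurable_filt I (mem_Icc.1 hj).1 (by have := (mem_Icc.1 hj).2; omega))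

lemma measurable_mhat
    (hq : ∀ t, 1 ≤ t → t ≤ N → ∀ i, StronglyMeasurable[filt I (t - 1)] fun ω => q t ω i)
    {i t : ℕ} (hi : 1 ≤ i) (hit : i ≤ t) (hiN : i ≤ N) :
    Measurable[filt I t] (mhat π f q I i) :=
  (Measurable.apply_of_countable (H := fun ω k => π k / q i ω k * f k)
    (fun k => (((hq i hi hiN k).measurable.mono (filt_mono I (by omega)) le_rfl).const_div
      (π k)).mul_const (f k)) (measurable_filt I hi hit)).add
    (measurable_sum_sampled π f (by omega))

lemma mhat_sub (q : ℕ → Ω → Fin N → ℝ) (I : ℕ → Ω → Fin N) (m : ℝ) (t : ℕ) (ω : Ω) :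
    mhat π f q I t ω - m = π (I t ω) / q t ω (I t ω) * f (I t ω) - muT π f I m t ω := by
  rw [mhat, muT]
  ring

end Sampling

-- Frozen after time `N`, so that it is a supermartingale for a filtration indexed by all of `ℕ`.
noncomputable def hoefProcess {N : ℕ} (π f : Fin N → ℝ) (q : ℕ → Ω → Fin N → ℝ)
    (I : ℕ → Ω → Fin N) (θ c : ℕ → Ω → ℝ) (m : ℝ) (t : ℕ) (ω : Ω) : ℝ :=
  Real.exp (∑ i ∈ Icc 1 (min t N), (θ i ω * (mhat π f q I i ω - m) - θ i ω ^ 2 * c i ω ^ 2 / 8))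

section HoefProcess

variable {N : ℕ} {π f : Fin N → ℝ} {q : ℕ → Ω → Fin N → ℝ} {I : ℕ → Ω → Fin N}
  {θ c : ℕ → Ω → ℝ} {m : ℝ}

lemma hoefProcess_zero (ω : Ω) : hoefProcess π f q I θ c m 0 ω = 1 := by
  simp [hoefProcess]

lemma hoefProcess_of_le {t : ℕ} (ht : t ≤ N) (ω : Ω) :
    hoefProcess π f q I θ c m t ω = Real.exp (∑ i ∈ Icc 1 t,
      (θ i ω * (mhat π f q I i ω - m) - θ i ω ^ 2 * c i ω ^ 2 / 8)) := by
  rw [hoefProcess, min_eq_left ht]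

lemma hoefProcess_min (t : ℕ) :
    hoefProcess π f q I θ c m (min t N) = hoefProcess π f q I θ c m t := by
  unfold hoefProcess
  rw [min_assoc, min_self]

lemma hoefProcess_succ {t : ℕ} (ht : t + 1 ≤ N) (ω : Ω) :
    hoefProcess π f q I θ c m (t + 1) ω = hoefProcess π f q I θ c m t ω *
      Real.exp (θ (t + 1) ω * (mhat π f q I (t + 1) ω - m) -
        θ (t + 1) ω ^ 2 * c (t + 1) ω ^ 2 / 8) := by
  rw [hoefProcess_of_le ht, hoefProcess_of_le (by omega), sum_Icc_succ_top (by omega),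
    Real.exp_add]

lemma hoefProcess_succ_of_le {t : ℕ} (ht : N ≤ t) :
    hoefProcess π f q I θ c m (t + 1) = hoefProcess π f q I θ c m t := by
  rw [← hoefProcess_min, min_eq_right (by omega), ← hoefProcess_min (t := t), min_eq_right ht]

variable [MeasurableSpace Ω] {μ : Measure Ω}

lemma stronglyAdapted_hoefProcess (hS : IsSamplingScheme μ I q) (hθ : IsPredictable I θ)
    (hc : IsPredictable I c) :
    StronglyAdapted (filtration I hS.measurable) (hoefProcess π f q I θ c m) := fun t => by
  refine (Measurable.exp (Finset.measurable_sum _ fun i hi => ?_)).stronglyMeasurable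
  obtain ⟨hi1, hi2⟩ := mem_Icc.1 hi
  have hit : i ≤ t := hi2.trans (min_le_left _ _)
  have hiN : i ≤ N := hi2.trans (min_le_right _ _)
  exact ((hθ.measurable hi1 hiN (by omega)).mul
    ((measurable_mhat π f hS.stronglyMeasurable_q hi1 hit hiN).sub_const m)).sub
    ((((hθ.measurable hi1 hiN (by omega)).pow_const 2).mul
      ((hc.measurable hi1 hiN (by omega)).pow_const 2)).div_const 8)

lemma condExp_hoefProcess_succ (hS : IsSamplingScheme μ I q) (hθ : IsPredictable I θ)
    (hc : IsPredictable I c) {t : ℕ} (ht : t + 1 ≤ N) :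
    μ[hoefProcess π f q I θ c m (t + 1) | filt I t] =ᵐ[μ] fun ω =>
      hoefProcess π f q I θ c m t ω * ∑ i ∈ remaining I (t + 1) ω, q (t + 1) ω i *
        Real.exp (θ (t + 1) ω * (π i / q (t + 1) ω i * f i - muT π f I m (t + 1) ω) -
          θ (t + 1) ω ^ 2 * c (t + 1) ω ^ 2 / 8) := by
  set G : Ω → Fin N → ℝ := fun ω i => hoefProcess π f q I θ c m t ω *
    Real.exp (θ (t + 1) ω * (π i / q (t + 1) ω i * f i - muT π f I m (t + 1) ω) -
      θ (t + 1) ω ^ 2 * c (t + 1) ω ^ 2 / 8)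
  have hMG : hoefProcess π f q I θ c m (t + 1) = fun ω => G ω (I (t + 1) ω) :=
    funext fun ω => by rw [hoefProcess_succ ht, mhat_sub]
  have hθt := hθ.measurable (by omega) ht le_rfl
  have hG : ∀ i, StronglyMeasurable[filt I (t + 1 - 1)] fun ω => G ω i := fun i => by
    refine Measurable.stronglyMeasurable ((stronglyAdapted_hoefProcess hS hθ hc t).measurable.mul
      (Measurable.exp ((hθt.mul (Measurable.sub ?_ ?_)).sub ?_)))
    · exact ((hS.stronglyMeasurable_q (t + 1) (by omega) ht i).measurable.const_div _).mul_const _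
    · exact measurable_const.sub (measurable_sum_sampled π f le_rfl)
    · exact ((hθt.pow_const 2).mul ((hc.measurable (by omega) ht le_rfl).pow_const 2)).div_const 8
  rw [hMG]
  simpa only [Nat.add_sub_cancel, G, mul_sum, mul_left_comm]
    using hS.condExp_apply (t + 1) (by omega) ht G hG

lemma integrable_hoefProcess [IsProbabilityMeasure μ] (hS : IsSamplingScheme μ I q)
    (hθ : IsPredictable I θ) (hc : IsPredictable I c) (t : ℕ) :
    Integrable (hoefProcess π f q I θ c m t) μ := by
  rw [← hoefProcess_min]
  rcases Nat.eq_zero_or_eq_succ_pred (min t N) with h | h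
  · simp only [h, funext hoefProcess_zero]
    exact integrable_const 1
  rw [h]
  have hT : min t N - 1 + 1 ≤ N := by omega
  refine integrable_of_condExp_ae_eq_pos (condExp_hoefProcess_succ hS hθ hc hT)
    (ae_of_all _ fun ω => mul_pos (Real.exp_pos _) (sum_pos (fun i hi => mul_pos
      (hS.q_pos _ ω (by omega) hT i hi) (Real.exp_pos _)) ⟨_, hS.mem_remaining _ ω (by omega) hT⟩))

lemma sum_remaining_mul_exp_le_one (hS : IsSamplingScheme μ I q) (hπ : ∀ i, 0 ≤ π i)
    (hf : ∀ i, f i ∈ Set.Icc (0 : ℝ) 1) {t : ℕ} (ht : 1 ≤ t) (htN : t ≤ N) (ω : Ω)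
    (θ' c' : ℝ) (hc : ∀ i ∈ remaining I t ω, π i / q t ω i ≤ c') :
    ∑ i ∈ remaining I t ω, q t ω i *
      Real.exp (θ' * (π i / q t ω i * f i - muT π f I (∑ i, π i * f i) t ω) -
        θ' ^ 2 * c' ^ 2 / 8) ≤ 1 := by
  have hq := hS.q_pos t ω ht htN
  set x : Fin N → ℝ := fun i => π i / q t ω i * f i
  have hmean : muT π f I (∑ i, π i * f i) t ω = ∑ i ∈ remaining I t ω, q t ω i * x i := by
    rw [← sum_remaining_eq_muT π f ω (by omega) fun s hs hsN => hS.mem_remaining s ω hs hsN]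
    exact sum_congr rfl fun i hi => by simp only [x]; field_simp [(hq i hi).ne']
  have hx : ∀ i ∈ remaining I t ω, x i ∈ Set.Icc 0 c' := fun i hi =>
    have hπq : 0 ≤ π i / q t ω i := div_nonneg (hπ i) (hq i hi).le
    ⟨mul_nonneg hπq (hf i).1, (mul_le_of_le_one_right hπq (hf i).2).trans (hc i hi)⟩
  calc _ = (∑ i ∈ remaining I t ω, q t ω i *
          Real.exp (θ' * (x i - ∑ j ∈ remaining I t ω, q t ω j * x j))) *
        Real.exp (-(θ' ^ 2 * c' ^ 2 / 8)) := by
        rw [hmean, sum_mul]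
        refine sum_congr rfl fun i _ => ?_
        rw [sub_eq_add_neg _ (_ / 8), Real.exp_add, mul_assoc]
    _ ≤ Real.exp (θ' ^ 2 * (c' - 0) ^ 2 / 8) * Real.exp (-(θ' ^ 2 * c' ^ 2 / 8)) := by
        gcongr
        exact sum_mul_exp_le_of_mem_Icc _ _ x (fun i hi => (hq i hi).le)
          (hS.sum_q t ω ht htN) hx θ'
    _ = 1 := by rw [← Real.exp_add, sub_zero, add_neg_cancel, Real.exp_zero]

lemma supermartingale_hoefProcess [IsProbabilityMeasure μ] (hS : IsSamplingScheme μ I q)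
    (hπ : ∀ i, 0 ≤ π i) (hf : ∀ i, f i ∈ Set.Icc (0 : ℝ) 1) (hθ : IsPredictable I θ)
    (hc : IsPredictable I c)
    (hcq : ∀ t, 1 ≤ t → t ≤ N → ∀ᵐ ω ∂μ, ∀ i ∈ remaining I t ω, π i / q t ω i ≤ c t ω) :
    Supermartingale (hoefProcess π f q I θ c (∑ i, π i * f i)) (filtration I hS.measurable) μ := by
  refine supermartingale_nat (stronglyAdapted_hoefProcess hS hθ hc)
    (integrable_hoefProcess hS hθ hc) fun t => ?_
  rcases le_or_gt N t with htN | htN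
  · rw [hoefProcess_succ_of_le htN, condExp_of_stronglyMeasurable ((filtration I _).le t)
      (stronglyAdapted_hoefProcess hS hθ hc t) (integrable_hoefProcess hS hθ hc t)]
  filter_upwards [condExp_hoefProcess_succ hS hθ hc htN, hcq (t + 1) (by omega) htN]
    with ω hω hcω
  exact hω.le.trans (mul_le_of_le_one_right (Real.exp_pos _).le
    (sum_remaining_mul_exp_le_one hS hπ hf (by omega) htN ω _ _ hcω))

lemma measure_exists_le_hoefProcess_le [IsProbabilityMeasure μ] (hS : IsSamplingScheme μ I q)
    (hπ : ∀ i, 0 ≤ π i) (hf : ∀ i, f i ∈ Set.Icc (0 : ℝ) 1) (hθ : IsPredictable I θ)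
    (hc : IsPredictable I c)
    (hcq : ∀ t, 1 ≤ t → t ≤ N → ∀ᵐ ω ∂μ, ∀ i ∈ remaining I t ω, π i / q t ω i ≤ c t ω)
    {ε : ℝ} (hε : 0 < ε) :
    μ {ω | ∃ t ≤ N, ε ≤ hoefProcess π f q I θ c (∑ i, π i * f i) t ω} ≤ ENNReal.ofReal ε⁻¹ := by
  have h := (supermartingale_hoefProcess hS hπ hf hθ hc hcq).maximal_ineq
    (fun _ _ => (Real.exp_pos _).le) hε.le N
  simp only [funext hoefProcess_zero, integral_const, probReal_univ, smul_eq_mul, mul_one] at h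
  rw [← ofReal_measureReal, inv_eq_one_div]
  exact ENNReal.ofReal_le_ofReal ((le_div_iff₀' hε).2 h)

end HoefProcess

lemma le_hoefProcess_of_notMem_Icc {N : ℕ} {π f : Fin N → ℝ} {q : ℕ → Ω → Fin N → ℝ}
    {I : ℕ → Ω → Fin N} {lam c : ℕ → Ω → ℝ} {α m : ℝ} (hα : 0 < α) {t : ℕ} (ht : 1 ≤ t)
    (htN : t ≤ N) {ω : Ω} (hlam : ∀ i ∈ Icc 1 t, 0 < lam i ω)
    (hm : m ∉ Set.Icc (hoefCenter π f q I lam t ω - hoefRadius α lam c t ω)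
      (hoefCenter π f q I lam t ω + hoefRadius α lam c t ω)) :
    2 / α ≤ hoefProcess π f q I lam c m t ω ∨ 2 / α ≤ hoefProcess π f q I (-lam) c m t ω := by
  have hL : 0 < ∑ i ∈ Icc 1 t, lam i ω := sum_pos hlam ⟨1, mem_Icc.2 ⟨le_rfl, ht⟩⟩
  have hsum : ∑ i ∈ Icc 1 t, lam i ω * (mhat π f q I i ω - m) =
      ∑ i ∈ Icc 1 t, lam i ω * mhat π f q I i ω - m * ∑ i ∈ Icc 1 t, lam i ω := by
    rw [mul_sum, ← sum_sub_distrib]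
    exact sum_congr rfl fun i _ => by ring
  rw [hoefProcess_of_le htN, hoefProcess_of_le htN, ← Real.exp_log (div_pos two_pos hα),
    Real.exp_le_exp, Real.exp_le_exp]
  simp only [Pi.neg_apply, neg_sq, neg_mul, sum_sub_distrib, sum_neg_distrib, hsum]
  rw [Set.mem_Icc, not_and_or, not_le, not_le, hoefCenter, hoefRadius, ← sub_div, ← add_div,
    lt_div_iff₀ hL, div_lt_iff₀ hL] at hm
  rcases hm with hm | hm
  · exact Or.inl (by linarith)
  · exact Or.inr (by linarith)

theorem statement14_general
    [m0 : MeasurableSpace Ω] (μ : Measure Ω) [IsProbabilityMeasure μ]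
    {N : ℕ}
    (π f : Fin N → ℝ)
    (hπ : ∀ i, π i ∈ Set.Ioc (0 : ℝ) 1) (hπsum : ∑ i, π i = 1)
    (hf : ∀ i, f i ∈ Set.Icc (0 : ℝ) 1)
    (I : ℕ → Ω → Fin N) (hI : ∀ t, Measurable (I t))
    (q : ℕ → Ω → Fin N → ℝ)
    (hq_meas : ∀ t, 1 ≤ t → t ≤ N → ∀ i,
      StronglyMeasurable[filt I (t - 1)] fun ω => q t ω i)
    (hq_pos : ∀ t ω, 1 ≤ t → t ≤ N → ∀ i ∈ remaining I t ω, 0 < q t ω i)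
    (hq_sum : ∀ t ω, 1 ≤ t → t ≤ N → ∑ i ∈ remaining I t ω, q t ω i = 1)
    (hWoR : ∀ t ω, 1 ≤ t → t ≤ N → I t ω ∈ remaining I t ω)
    (hcond : ∀ t, 1 ≤ t → t ≤ N → ∀ G : Ω → Fin N → ℝ,
      (∀ i, StronglyMeasurable[filt I (t - 1)] fun ω => G ω i) →
      μ[(fun ω => G ω (I t ω)) | filt I (t - 1)]
        =ᵐ[μ] fun ω => ∑ i ∈ remaining I t ω, q t ω i * G ω i)
    (mstar : ℝ) (hmstar : mstar = ∑ i, π i * f i)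
    (α : ℝ) (hα : α ∈ Set.Ioo (0 : ℝ) 1)
    (lam c : ℕ → Ω → ℝ)
    (hlam_meas : ∀ t, 1 ≤ t → t ≤ N → StronglyMeasurable[filt I (t - 1)] (lam t))
    (hlam_pos : ∀ t ω, 1 ≤ t → t ≤ N → 0 < lam t ω)
    (hc_meas : ∀ t, 1 ≤ t → t ≤ N → StronglyMeasurable[filt I (t - 1)] (c t))
    (hc : ∀ t, 1 ≤ t → t ≤ N →
      ∀ᵐ ω ∂μ, ∀ i ∈ remaining I t ω, π i / q t ω i ≤ c t ω) :
    μ {ω | ∃ t, 1 ≤ t ∧ t ≤ N ∧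
        mstar ∉ Set.Icc (hoefCenter π f q I lam t ω - hoefRadius α lam c t ω)
            (hoefCenter π f q I lam t ω + hoefRadius α lam c t ω) ∩ Set.Icc (0 : ℝ) 1}
      ≤ ENNReal.ofReal α := by
  subst hmstar
  have hS : IsSamplingScheme μ I q := ⟨hI, hq_meas, hq_pos, hq_sum, hWoR, hcond⟩
  have hπ0 : ∀ i, 0 ≤ π i := fun i => (hπ i).1.le
  have hm : ∑ i, π i * f i ∈ Set.Icc (0 : ℝ) 1 :=
    ⟨sum_nonneg fun i _ => mul_nonneg (hπ0 i) (hf i).1,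
      hπsum ▸ sum_le_sum fun i _ => mul_le_of_le_one_right (hπ0 i) (hf i).2⟩
  have hε : 0 < 2 / α := div_pos two_pos hα.1
  have hbound := fun θ (hθ : IsPredictable I θ) =>
    measure_exists_le_hoefProcess_le hS hπ0 hf hθ hc_meas hc hε
  calc μ _ ≤ μ ({ω | ∃ t ≤ N, 2 / α ≤ hoefProcess π f q I lam c (∑ i, π i * f i) t ω} ∪
        {ω | ∃ t ≤ N, 2 / α ≤ hoefProcess π f q I (-lam) c (∑ i, π i * f i) t ω}) := by
        refine measure_mono fun ω ⟨t, ht, htN, hnot⟩ => ?_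
        exact (le_hoefProcess_of_notMem_Icc hα.1 ht htN
          (fun i hi => hlam_pos i ω (mem_Icc.1 hi).1 ((mem_Icc.1 hi).2.trans htN))
          fun h => hnot ⟨h, hm⟩).imp (⟨t, htN, ·⟩) (⟨t, htN, ·⟩)
    _ ≤ ENNReal.ofReal (2 / α)⁻¹ + ENNReal.ofReal (2 / α)⁻¹ :=
        (measure_union_le _ _).trans (add_le_add (hbound lam hlam_meas)
          (hbound (-lam) fun t ht htN => (hlam_meas t ht htN).neg))
    _ = ENNReal.ofReal α := by
        rw [← ENNReal.ofReal_add (inv_pos.2 hε).le (inv_pos.2 hε).le, inv_div]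
        ring_nf

/-- **Hoeffding confidence sequence.** Let `α ∈ (0,1)`, let `(λ_t)` be a
predictable sequence with `λ_t > 0`, and let `(c_t)` be a predictable sequence with
`c_t ≥ max_{i∈N_t} π(i)/q_t(i)` almost surely. Then with
`C_t^H = (μ̂_t(λ_1^t) ± (log(2/α) + Σ_{i=1}^t λ_i² c_i²/8)/(Σ_{i=1}^t λ_i)) ∩ [0,1]` one has
`P(∃ t ∈ {1,…,N} : m* ∉ C_t^H) ≤ α`. -/
theorem statement14
    [m0 : MeasurableSpace Ω] (μ : Measure Ω) [IsProbabilityMeasure μ]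
    {N : ℕ} (hN : 1 ≤ N)
    (π f : Fin N → ℝ)
    (hπ : ∀ i, π i ∈ Set.Ioc (0 : ℝ) 1) (hπsum : ∑ i, π i = 1)
    (hf : ∀ i, f i ∈ Set.Icc (0 : ℝ) 1)
    (I : ℕ → Ω → Fin N) (hI : ∀ t, Measurable (I t))
    (q : ℕ → Ω → Fin N → ℝ)
    (hq_meas : ∀ t, 1 ≤ t → t ≤ N → ∀ i,
      StronglyMeasurable[filt I (t - 1)] fun ω => q t ω i)
    (hq_pos : ∀ t ω, 1 ≤ t → t ≤ N → ∀ i ∈ remaining I t ω, 0 < q t ω i)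
    (hq_sum : ∀ t ω, 1 ≤ t → t ≤ N → ∑ i ∈ remaining I t ω, q t ω i = 1)
    (hWoR : ∀ t ω, 1 ≤ t → t ≤ N → I t ω ∈ remaining I t ω)
    (hcond : ∀ t, 1 ≤ t → t ≤ N → ∀ G : Ω → Fin N → ℝ,
      (∀ i, StronglyMeasurable[filt I (t - 1)] fun ω => G ω i) →
      μ[(fun ω => G ω (I t ω)) | filt I (t - 1)]
        =ᵐ[μ] fun ω => ∑ i ∈ remaining I t ω, q t ω i * G ω i)
    (mstar : ℝ) (hmstar : mstar = ∑ i, π i * f i)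
    (α : ℝ) (hα : α ∈ Set.Ioo (0 : ℝ) 1)
    (lam c : ℕ → Ω → ℝ)
    (hlam_meas : ∀ t, 1 ≤ t → t ≤ N → StronglyMeasurable[filt I (t - 1)] (lam t))
    (hlam_pos : ∀ t ω, 1 ≤ t → t ≤ N → 0 < lam t ω)
    (hc_meas : ∀ t, 1 ≤ t → t ≤ N → StronglyMeasurable[filt I (t - 1)] (c t))
    (hc : ∀ t, 1 ≤ t → t ≤ N →
      ∀ᵐ ω ∂μ, ∀ i ∈ remaining I t ω, π i / q t ω i ≤ c t ω) :
    μ {ω | ∃ t, 1 ≤ t ∧ t ≤ N ∧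
        mstar ∉ Set.Icc (hoefCenter π f q I lam t ω - hoefRadius α lam c t ω)
            (hoefCenter π f q I lam t ω + hoefRadius α lam c t ω) ∩ Set.Icc (0 : ℝ) 1}
      ≤ ENNReal.ofReal α :=
  statement14_general (m0 := m0) μ π f hπ hπsum hf I hI q hq_meas hq_pos hq_sum hWoR hcond mstar
    hmstar α hα lam c hlam_meas hlam_pos hc_meas hc

end RLFA
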